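/- arXiv:1811.09526 — 2 statements merged into one kernel-verified Lean document; each statement's English description precedes it below -/
import Mathlib

section
/- Assume (G,K,θ) is a multiplicity-free triple and let φ and μ be two distinct spherical functions. Then: (i) φ* = φ, i.e., conj(φ(g⁻¹)) = φ(g) for all g ∈ G; (ii) φ*μ = 0 (the convolution is identically zero); (iii) ⟨λ_G(g₁)φ, λ_G(g₂)μ⟩_{L(G)} = 0 for all g₁, g₂ ∈ G, where λ_G is the left regular representation; in particular ⟨φ, μ⟩_{L(G)} = 0. -/
open scoped BigOperators ComplexConjugate Classical

set_option linter.unusedSectionVars false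
set_option synthInstance.maxHeartbeats 1000000
set_option maxHeartbeats 1000000

noncomputable section

namespace MFT

variable {G : Type} [Group G] [Fintype G]
variable {V : Type} [NormedAddCommGroup V] [InnerProductSpace ℂ V] [FiniteDimensional ℂ V]

/-- Left translation of functions on `G`: `(translate h f) g = f (h⁻¹ * g)`.
This is the left regular action of `G`. -/
def translate {A : Type} (h : G) (f : G → A) : G → A := fun g => f (h⁻¹ * g)

/-- A representation by linear automorphisms is unitary if it preserves the inner product. -/
def IsUnitaryRep {H W : Type} [Group H] [NormedAddCommGroup W] [InnerProductSpace ℂ W]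
    (ρ : H →* (W ≃ₗ[ℂ] W)) : Prop :=
  ∀ (h : H) (x y : W), (inner ℂ (ρ h x) (ρ h y) : ℂ) = (inner ℂ x y : ℂ)

/-- Irreducibility of a representation: the space is nonzero and has no proper nonzero
invariant subspace. -/
def IsIrreducibleRep {H W : Type} [Group H] [AddCommGroup W] [Module ℂ W]
    (ρ : H →* (W ≃ₗ[ℂ] W)) : Prop :=
  (⊥ : Submodule ℂ W) ≠ ⊤ ∧
    ∀ p : Submodule ℂ W, (∀ (h : H) (x : W), x ∈ p → ρ h x ∈ p) → p = ⊥ ∨ p = ⊤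

variable (K : Subgroup G) (θ : ↥K →* (V ≃ₗ[ℂ] V))

/-- The space `Ind_K^G V` of the representation induced by `θ`:
functions `f : G → V` with `f (g k) = θ k⁻¹ (f g)`. -/
def ind : Submodule ℂ (G → V) where
  carrier := {f | ∀ (g : G) (k : K), f (g * (k : G)) = θ k⁻¹ (f g)}
  add_mem' := by
    intro f₁ f₂ h₁ h₂ g k
    simp only [Pi.add_apply, h₁ g k, h₂ g k, map_add]
  zero_mem' := by intro g k; simp
  smul_mem' := by
    intro c f hf g k
    simp only [Pi.smul_apply, hf g k, map_smul]

theorem translate_mem_ind {f : G → V} (hf : f ∈ ind K θ) (h : G) : translate h f ∈ ind K θ := by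
  intro g k
  simpa [translate, mul_assoc] using hf (h⁻¹ * g) k

/-- The left regular action of `G` on the induced space, `λ(h) f = f (h⁻¹ ·)`. -/
def lamL (h : G) : ↥(ind K θ) →ₗ[ℂ] ↥(ind K θ) where
  toFun f := ⟨translate h ↑f, translate_mem_ind K θ f.2 h⟩
  map_add' f₁ f₂ := by apply Subtype.ext; funext g; simp [translate]
  map_smul' c f := by apply Subtype.ext; funext g; simp [translate]

instance : AddCommGroup (↥(ind K θ) →ₗ[ℂ] ↥(ind K θ)) := LinearMap.addCommGroup

instance : Module ℂ (↥(ind K θ) →ₗ[ℂ] ↥(ind K θ)) := LinearMap.module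

/-- The Hecke algebra condition: `F (k₁ g k₂) = θ k₂⁻¹ ∘ F g ∘ θ k₁⁻¹`. -/
def IsHecke (F : G → (V →ₗ[ℂ] V)) : Prop :=
  ∀ (g : G) (k₁ k₂ : K),
    F ((k₁ : G) * g * (k₂ : G)) = (θ k₂⁻¹).toLinearMap ∘ₗ F g ∘ₗ (θ k₁⁻¹).toLinearMap

/-- Convolution on the Hecke algebra: `(F₁ * F₂) g = ∑ h, F₁ (h⁻¹ g) ∘ F₂ h`. -/
def heckeConv (F₁ F₂ : G → (V →ₗ[ℂ] V)) : G → (V →ₗ[ℂ] V) :=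
  fun g => ∑ h : G, F₁ (h⁻¹ * g) ∘ₗ F₂ h

/-- Involution on the Hecke algebra: `F* g = (F g⁻¹)*`. -/
def heckeStar (F : G → (V →ₗ[ℂ] V)) : G → (V →ₗ[ℂ] V) :=
  fun g => LinearMap.adjoint (F g⁻¹)

/-- The inner product on the Hecke algebra:
`⟨F₁, F₂⟩ = ∑ g, (dim V)⁻¹ tr (F₂(g)* ∘ F₁(g))`. -/
def heckeInner (F₁ F₂ : G → (V →ₗ[ℂ] V)) : ℂ :=
  ∑ g : G, (Module.finrank ℂ V : ℂ)⁻¹ *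
    LinearMap.trace ℂ V (LinearMap.adjoint (F₂ g) ∘ₗ F₁ g)

/-- `(ξ F) f g = ∑ h, F (h⁻¹ g) (f h)`. -/
def xiFun (F : G → (V →ₗ[ℂ] V)) (f : G → V) : G → V := fun g => ∑ h : G, F (h⁻¹ * g) (f h)

/-- `ξ F` as a linear endomorphism of `G → V`. -/
def xiL (F : G → (V →ₗ[ℂ] V)) : (G → V) →ₗ[ℂ] (G → V) where
  toFun := xiFun F
  map_add' f₁ f₂ := by funext g; simp [xiFun, Finset.sum_add_distrib]
  map_smul' c f := by funext g; simp [xiFun, Finset.smul_sum]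

/-- The paper's inner product on the induced space:
`⟨f₁, f₂⟩ = |K|⁻¹ ∑ g, ⟨f₁ g, f₂ g⟩_V` (conjugate-linear in the second variable). -/
def innerInd (f₁ f₂ : G → V) : ℂ := (Nat.card K : ℂ)⁻¹ * ∑ g : G, (inner ℂ (f₂ g) (f₁ g) : ℂ)

/-- Convolution of complex valued functions on `G`. -/
def convC (f₁ f₂ : G → ℂ) : G → ℂ := fun g => ∑ h : G, f₁ h * f₂ (h⁻¹ * g)

/-- The involution `f* g = conj (f g⁻¹)` on `L(G)`. -/
def starC (f : G → ℂ) : G → ℂ := fun g => conj (f g⁻¹)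

/-- The paper's inner product on `L(G)`: `⟨f₁, f₂⟩ = ∑ g, f₁ g • conj (f₂ g)`. -/
def innerC (f₁ f₂ : G → ℂ) : ℂ := ∑ g : G, f₁ g * conj (f₂ g)

/-- The function `ψ (k) = (d_θ/|K|) ⟨v, θ k v⟩` on `K`, extended by `0` on `G \ K`. -/
def psi (v : V) : G → ℂ := fun g =>
  if h : g ∈ K then ((Module.finrank ℂ V : ℂ) / (Nat.card K : ℂ)) * (inner ℂ (θ ⟨g, h⟩ v) v : ℂ)
  else 0

/-- `(T_v f) g = √(d_θ/|K|) ⟨f g, v⟩`. -/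
def Tv (v : V) (f : G → V) : G → ℂ := fun g =>
  (Real.sqrt ((Module.finrank ℂ V : ℝ) / (Nat.card K : ℝ)) : ℂ) * (inner ℂ v (f g) : ℂ)

/-- The Hecke algebra `H(G,K,ψ) = {f : f = ψ * f * ψ}` as a set. -/
def HSet (v : V) : Set (G → ℂ) := {f | convC (convC (psi K θ v) f) (psi K θ v) = f}

/-- `(S_v F) g = d_θ ⟨F g v, v⟩`. -/
def Sv (v : V) (F : G → (V →ₗ[ℂ] V)) : G → ℂ :=
  fun g => (Module.finrank ℂ V : ℂ) * (inner ℂ v (F g v) : ℂ)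

/-- A spherical function: an element of `H(G,K,ψ)` taking value `1` at the identity which
is an eigenvector of all convolution operators coming from `H(G,K,ψ)`. -/
def IsSpherical (v : V) (φ : G → ℂ) : Prop :=
  φ ∈ HSet K θ v ∧ φ 1 = 1 ∧ ∀ f ∈ HSet K θ v, ∃ c : ℂ, convC φ f = c • φ

/-- The intertwining space `Hom_{K_s}(Res^K_{K_s} θ, θ^s)` where `K_s = K ∩ s K s⁻¹`
and `θ^s (x) = θ (s⁻¹ x s)`. -/
def interSpace (s : G) : Submodule ℂ (V →ₗ[ℂ] V) where
  carrier := {T | ∀ (x : G) (hx : x ∈ K) (hx' : s⁻¹ * x * s ∈ K),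
      T ∘ₗ (θ ⟨x, hx⟩).toLinearMap = (θ ⟨s⁻¹ * x * s, hx'⟩).toLinearMap ∘ₗ T}
  add_mem' := by
    intro a b ha hb x hx hx'
    simp only [LinearMap.add_comp, LinearMap.comp_add, ha x hx hx', hb x hx hx']
  zero_mem' := by
    intro x hx hx'
    simp
  smul_mem' := by
    intro c a ha x hx hx'
    simp only [LinearMap.smul_comp, LinearMap.comp_smul, ha x hx hx']

/-- `S` is a complete set of representatives of the double cosets `K\G/K`. -/
def IsDoubleCosetReps (S : Finset G) : Prop :=
  ∀ g : G, ∃! s : G, s ∈ S ∧ ∃ k₁ k₂ : K, g = (k₁ : G) * s * (k₂ : G)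

/-- The commutant `End_G(Ind_K^G V)`. -/
def commutant : Submodule ℂ (↥(ind K θ) →ₗ[ℂ] ↥(ind K θ)) where
  carrier := {T | ∀ (h : G) (f : ↥(ind K θ)), T (lamL K θ h f) = lamL K θ h (T f)}
  add_mem' := by
    intro a b ha hb h f
    simp [ha h f, hb h f]
  zero_mem' := by intro h f; simp
  smul_mem' := by
    intro c a ha h f
    simp [ha h f]

/-- The space `Hom_G(W, Ind_K^G V)` of `G`-equivariant linear maps from `(σ, W)` to the
induced representation. -/
def homGInd {W : Type} [AddCommGroup W] [Module ℂ W] (σ : G →* (W ≃ₗ[ℂ] W)) :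
    Submodule ℂ (W →ₗ[ℂ] (G → V)) where
  carrier := {A | (∀ w : W, A w ∈ ind K θ) ∧ ∀ (g : G) (w : W), A (σ g w) = translate g (A w)}
  add_mem' := by
    rintro A B ⟨hA₁, hA₂⟩ ⟨hB₁, hB₂⟩
    refine ⟨fun w => (ind K θ).add_mem (hA₁ w) (hB₁ w), fun g w => ?_⟩
    funext x
    simp [translate, hA₂ g w, hB₂ g w, Pi.add_apply]
  zero_mem' := by
    refine ⟨fun w => (ind K θ).zero_mem, fun g w => ?_⟩
    funext x
    simp [translate]
  smul_mem' := by
    rintro c A ⟨hA₁, hA₂⟩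
    refine ⟨fun w => (ind K θ).smul_mem c (hA₁ w), fun g w => ?_⟩
    funext x
    simp [translate, hA₂ g w]

/-- `Ind_K^G θ` is multiplicity-free: every irreducible representation of `G` occurs with
multiplicity at most `1`. -/
def IsMultFree : Prop :=
  ∀ (W : Type) [AddCommGroup W] [Module ℂ W] [FiniteDimensional ℂ W]
    (σ : G →* (W ≃ₗ[ℂ] W)), IsIrreducibleRep σ → Module.finrank ℂ ↥(homGInd K θ σ) ≤ 1

theorem convC_add_left (f₁ f₂ g : G → ℂ) : convC (f₁ + f₂) g = convC f₁ g + convC f₂ g := by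
  funext x
  simp [convC, add_mul, Finset.sum_add_distrib]

theorem convC_add_right (f g₁ g₂ : G → ℂ) : convC f (g₁ + g₂) = convC f g₁ + convC f g₂ := by
  funext x
  simp [convC, mul_add, Finset.sum_add_distrib]

theorem convC_smul_left (c : ℂ) (f g : G → ℂ) : convC (c • f) g = c • convC f g := by
  funext x
  simp [convC, Finset.mul_sum, mul_assoc]

theorem convC_smul_right (c : ℂ) (f g : G → ℂ) : convC f (c • g) = c • convC f g := by
  funext x
  simp [convC, Finset.mul_sum, mul_left_comm]

theorem convC_zero_left (g : G → ℂ) : convC 0 g = 0 := by funext x; simp [convC]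

theorem convC_zero_right (f : G → ℂ) : convC f 0 = 0 := by funext x; simp [convC]

/-- The Hecke algebra `H(G,K,ψ)` as a subspace of `L(G)`. -/
def heckeSub (v : V) : Submodule ℂ (G → ℂ) where
  carrier := HSet K θ v
  add_mem' := by
    intro a b ha hb
    have ha' : convC (convC (psi K θ v) a) (psi K θ v) = a := ha
    have hb' : convC (convC (psi K θ v) b) (psi K θ v) = b := hb
    show convC (convC (psi K θ v) (a + b)) (psi K θ v) = a + b
    rw [convC_add_right, convC_add_left, ha', hb']
  zero_mem' := by
    show convC (convC (psi K θ v) 0) (psi K θ v) = 0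
    rw [convC_zero_right, convC_zero_left]
  smul_mem' := by
    intro c a ha
    have ha' : convC (convC (psi K θ v) a) (psi K θ v) = a := ha
    show convC (convC (psi K θ v) (c • a)) (psi K θ v) = c • a
    rw [convC_smul_right, convC_smul_left, ha']

/-- The subspace `I(G,K,ψ) = {f ∈ L(G) : f * ψ = f}`. -/
def ISub (v : V) : Submodule ℂ (G → ℂ) where
  carrier := {φ | convC φ (psi K θ v) = φ}
  add_mem' := by
    intro a b ha hb
    have ha' : convC a (psi K θ v) = a := ha
    have hb' : convC b (psi K θ v) = b := hb
    show convC (a + b) (psi K θ v) = a + b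
    rw [convC_add_left, ha', hb']
  zero_mem' := by
    show convC 0 (psi K θ v) = 0
    rw [convC_zero_left]
  smul_mem' := by
    intro c a ha
    have ha' : convC a (psi K θ v) = a := ha
    show convC (c • a) (psi K θ v) = c • a
    rw [convC_smul_left, ha']

/-- The subspace of `L(G)` spanned by the left translates of `φ`. -/
def sphSpan (φ : G → ℂ) : Submodule ℂ (G → ℂ) :=
  Submodule.span ℂ (Set.range fun g : G => translate g φ)

/-- A submodule of functions on `G` invariant under all left translations. -/
def IsInvariantSub {A : Type} [AddCommGroup A] [Module ℂ A] (p : Submodule ℂ (G → A)) : Prop :=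
  ∀ h : G, ∀ f ∈ p, translate h f ∈ p

/-- `p` is an irreducible `G`-invariant subspace of the induced representation. -/
def IsIrredSubOfInd (p : Submodule ℂ (G → V)) : Prop :=
  p ≤ ind K θ ∧ IsInvariantSub p ∧ p ≠ ⊥ ∧
    ∀ q : Submodule ℂ (G → V), q ≤ p → IsInvariantSub q → q = ⊥ ∨ q = p

/-! Because `θ` is unitary, `ψ* = ψ`, so `H(G,K,ψ)` is closed under `f ↦ f*`. For a spherical `φ`
this gives `φ * φ* = c • φ` with `c = (φ * φ*)(1) = ∑ |φ|² ≥ 1` real, and applying `*` yields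
`c • φ* = c • φ`. For spherical `φ ≠ μ` write `φ * μ = c • φ` and `μ * φ = c' • μ`; applying `*` to
the first gives `μ * φ = conj c • φ`, and evaluating at `1` gives `conj c = c'`, so `c ≠ 0` would
force `φ = μ`. Finally `⟨λ(g₁) φ, λ(g₂) μ⟩ = (φ * μ*)(g₁⁻¹ g₂)`. -/

theorem translate_one {A : Type} (f : G → A) : translate (1 : G) f = f := by
  funext g
  simp [translate]

theorem convC_assoc (a b c : G → ℂ) : convC (convC a b) c = convC a (convC b c) := by
  funext g
  simp only [convC, Finset.sum_mul, Finset.mul_sum]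
  rw [Finset.sum_comm]
  refine Finset.sum_congr rfl fun t _ => ?_
  refine Fintype.sum_equiv (Equiv.mulLeft t⁻¹) _ _ fun h => ?_
  simp [mul_assoc]

theorem starC_starC (f : G → ℂ) : starC (starC f) = f := by
  funext g
  simp [starC]

theorem starC_smul (c : ℂ) (f : G → ℂ) : starC (c • f) = conj c • starC f := by
  funext g
  simp [starC]

theorem starC_convC (a b : G → ℂ) : starC (convC a b) = convC (starC b) (starC a) := by
  funext g
  simp only [starC, convC, map_sum, map_mul]
  refine Fintype.sum_equiv (Equiv.mulLeft g) _ _ fun h => ?_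
  simp [mul_comm, mul_assoc]

theorem convC_starC_self_one (f : G → ℂ) :
    convC f (starC f) 1 = ((∑ h : G, Complex.normSq (f h) : ℝ) : ℂ) := by
  simp [convC, starC, Complex.mul_conj]

theorem innerC_translate_translate (f u : G → ℂ) (g₁ g₂ : G) :
    innerC (translate g₁ f) (translate g₂ u) = convC f (starC u) (g₁⁻¹ * g₂) := by
  simp only [innerC, translate, convC, starC]
  refine Fintype.sum_equiv (Equiv.mulLeft g₁).symm _ _ fun g => ?_
  simp [mul_assoc]

section Spherical

variable {K θ}

theorem starC_psi (hu : IsUnitaryRep θ) (v : V) : starC (psi K θ v) = psi K θ v := by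
  funext g
  by_cases hg : g ∈ K
  · set k : K := ⟨g, hg⟩
    have hθ : θ k (θ k⁻¹ v) = v := by
      rw [← LinearEquiv.mul_apply, ← map_mul, mul_inv_cancel, map_one]
      rfl
    have hk : (inner ℂ v (θ k⁻¹ v) : ℂ) = inner ℂ (θ k v) v := by
      rw [← hu k v (θ k⁻¹ v), hθ]
    simp only [starC, psi, dif_pos hg, dif_pos (inv_mem hg), map_mul, map_div₀, map_natCast]
    rw [← hk, ← inner_conj_symm, Complex.conj_conj]
    rfl
  · have hg' : g⁻¹ ∉ K := fun h => hg (by simpa using inv_mem h)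
    simp [starC, psi, hg, hg']

theorem starC_mem_HSet (hu : IsUnitaryRep θ) {v : V} {f : G → ℂ} (hf : f ∈ HSet K θ v) :
    starC f ∈ HSet K θ v := by
  change convC (convC (psi K θ v) (starC f)) (psi K θ v) = starC f
  conv_rhs => rw [← (hf : convC (convC (psi K θ v) f) (psi K θ v) = f)]
  rw [starC_convC, starC_convC, starC_psi hu, convC_assoc]

namespace IsSpherical

variable {v : V} {φ μ : G → ℂ}

theorem starC_eq (hφ : IsSpherical K θ v φ) (hu : IsUnitaryRep θ) : starC φ = φ := by
  obtain ⟨hφH, hφ1, hφe⟩ := hφ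
  obtain ⟨c, hc⟩ := hφe (starC φ) (starC_mem_HSet hu hφH)
  set r : ℝ := ∑ h : G, Complex.normSq (φ h)
  have hcr : c = r := by
    have h := congrFun hc 1
    rw [convC_starC_self_one, Pi.smul_apply, hφ1, smul_eq_mul, mul_one] at h
    exact h.symm
  have hr : 1 ≤ r := by
    simpa [hφ1] using Finset.single_le_sum (fun h _ => Complex.normSq_nonneg (φ h))
      (Finset.mem_univ (1 : G))
  have hc0 : c ≠ 0 := by
    rw [hcr]
    exact_mod_cast (zero_lt_one.trans_le hr).ne'
  refine smul_right_injective (G → ℂ) hc0 ?_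
  calc c • starC φ = starC (c • φ) := by rw [starC_smul, hcr, Complex.conj_ofReal]
    _ = starC (convC φ (starC φ)) := by rw [hc]
    _ = c • φ := by rw [starC_convC, starC_starC, hc]

theorem convC_eq_zero (hφ : IsSpherical K θ v φ) (hμ : IsSpherical K θ v μ)
    (hu : IsUnitaryRep θ) (hne : φ ≠ μ) : convC φ μ = 0 := by
  obtain ⟨c, hc⟩ := hφ.2.2 μ hμ.1
  obtain ⟨c', hc'⟩ := hμ.2.2 φ hφ.1
  have hμφ : c' • μ = conj c • φ := by
    rw [← hc', ← hμ.starC_eq hu, ← hφ.starC_eq hu, ← starC_convC, hc, starC_smul]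
  have hcc' : c' = conj c := by
    simpa [hφ.2.1, hμ.2.1] using congrFun hμφ 1
  rw [hcc'] at hμφ
  have hc0 : conj c = 0 := by
    by_contra h
    exact hne (smul_right_injective (G → ℂ) h hμφ).symm
  rw [hc, show c = 0 by simpa using hc0, zero_smul]

end IsSpherical

end Spherical

theorem statement8_general (K : Subgroup G) (θ : ↥K →* (V ≃ₗ[ℂ] V))
    (hu : IsUnitaryRep θ) (v : V) (φ μ : G → ℂ)
    (hφ : IsSpherical K θ v φ) (hμ : IsSpherical K θ v μ) (hne : φ ≠ μ) :
    (∀ g : G, conj (φ g⁻¹) = φ g) ∧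
    convC φ μ = 0 ∧
    (∀ g₁ g₂ : G, innerC (translate g₁ φ) (translate g₂ μ) = 0) ∧
    innerC φ μ = 0 := by
  have hφμ : convC φ μ = 0 := hφ.convC_eq_zero hμ hu hne
  have horth : ∀ g₁ g₂ : G, innerC (translate g₁ φ) (translate g₂ μ) = 0 := fun g₁ g₂ => by
    rw [innerC_translate_translate, hμ.starC_eq hu, hφμ, Pi.zero_apply]
  refine ⟨congrFun (hφ.starC_eq hu), hφμ, horth, ?_⟩
  simpa only [translate_one] using horth 1 1

/-- Let `(G,K,θ)` be a multiplicity-free triple and `φ ≠ μ` two distinct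
spherical functions.  Then (i) `φ* = φ`; (ii) `φ * μ = 0`; (iii) all `G`-translates of `φ`
are orthogonal to all `G`-translates of `μ`; in particular `⟨φ, μ⟩_{L(G)} = 0`. -/
theorem statement8 (K : Subgroup G) (θ : ↥K →* (V ≃ₗ[ℂ] V))
    (hu : IsUnitaryRep θ) (hirr : IsIrreducibleRep θ) (v : V) (hv : ‖v‖ = 1)
    (hmf : IsMultFree K θ) (φ μ : G → ℂ)
    (hφ : IsSpherical K θ v φ) (hμ : IsSpherical K θ v μ) (hne : φ ≠ μ) :
    (∀ g : G, conj (φ g⁻¹) = φ g) ∧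
    convC φ μ = 0 ∧
    (∀ g₁ g₂ : G, innerC (translate g₁ φ) (translate g₂ μ) = 0) ∧
    innerC φ μ = 0 :=
  statement8_general K θ hu v φ μ hφ hμ hne

end MFT
end
end

section
/- Assume (G,K,θ) is a multiplicity-free triple, let (σ, W) be an irreducible unitary G-representation contained in Ind_K^G θ, and let L_σ : V → W be an isometric K-equivariant linear map spanning the one-dimensional space Hom_K(V, Res^G_K W). Then the map T_σ : W → (G → V) defined by (T_σ w)(g) = √((d_σ·|K|)/(d_θ·|G|))·L_σ*(σ(g⁻¹)w), where d_σ = dim W and L_σ* is the adjoint of L_σ, takes values in Ind_K^G V, is G-equivariant (T_σ∘σ(g) = λ(g)∘T_σ for all g ∈ G), and is an isometry. -/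
/-!
Up to the normalising constant, `T_σ w` is the matrix coefficient `g ↦ L* σ(g⁻¹) w`. Since `L`
intertwines the unitary representations `θ` and `σ|_K`, so does `L*`, which gives membership in
`Ind_K^G V`; equivariance is `σ(g⁻¹) σ(h) = σ((h⁻¹ g)⁻¹)`. For the isometry, unitarity of `σ`
turns `⟨T_σ w₁, T_σ w₂⟩` into a multiple of `⟨w₂, A w₁⟩` with `A = ∑_g σ(g) L L* σ(g)⁻¹`.
`A` commutes with `σ`, so by Schur's lemma it is a scalar, and comparing traces
(`tr (L L*) = tr (L* L) = d_θ` because `L` is isometric) gives `A = |G| d_θ / d_σ`,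
which is exactly cancelled by the normalising constant.
-/

open scoped BigOperators ComplexConjugate Classical

set_option linter.unusedSectionVars false
set_option synthInstance.maxHeartbeats 1000000
set_option maxHeartbeats 1000000

noncomputable section

namespace MFT

variable {G : Type} [Group G] [Fintype G]
variable {V : Type} [NormedAddCommGroup V] [InnerProductSpace ℂ V] [FiniteDimensional ℂ V]

variable (K : Subgroup G) (θ : ↥K →* (V ≃ₗ[ℂ] V))

/-- The map `T_σ : W → Ind_K^G V`,
`(T_σ w) g = √((d_σ |K|)/(d_θ |G|)) L_σ* (σ(g⁻¹) w)`. -/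
def Tsig (K : Subgroup G) {W : Type} [NormedAddCommGroup W] [InnerProductSpace ℂ W]
    [FiniteDimensional ℂ W] (σ : G →* (W ≃ₗ[ℂ] W)) (L : V →ₗ[ℂ] W) (w : W) : G → V :=
  fun g =>
    (Real.sqrt ((Module.finrank ℂ W * Nat.card K : ℝ) /
        (Module.finrank ℂ V * Fintype.card G : ℝ)) : ℂ) •
      LinearMap.adjoint L (σ g⁻¹ w)

section Representations

variable {H E : Type} [Group H] [AddCommGroup E] [Module ℂ E]

theorem rep_mul_apply (ρ : H →* (E ≃ₗ[ℂ] E)) (a b : H) (x : E) : ρ (a * b) x = ρ a (ρ b x) := by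
  rw [map_mul, LinearEquiv.mul_apply]

theorem rep_symm_apply (ρ : H →* (E ≃ₗ[ℂ] E)) (h : H) (x : E) : (ρ h).symm x = ρ h⁻¹ x := by
  rw [map_inv, LinearEquiv.coe_inv]

theorem rep_apply_inv_apply (ρ : H →* (E ≃ₗ[ℂ] E)) (h : H) (x : E) : ρ h (ρ h⁻¹ x) = x := by
  rw [← rep_symm_apply, LinearEquiv.apply_symm_apply]

theorem IsIrreducibleRep.nontrivial {ρ : H →* (E ≃ₗ[ℂ] E)} (hρ : IsIrreducibleRep ρ) :
    Nontrivial E :=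
  (Submodule.nontrivial_iff ℂ).mp (nontrivial_of_ne _ _ hρ.1)

theorem IsIrreducibleRep.exists_eq_smul_one [FiniteDimensional ℂ E] {ρ : H →* (E ≃ₗ[ℂ] E)}
    (hρ : IsIrreducibleRep ρ) {A : Module.End ℂ E} (hA : ∀ h x, A (ρ h x) = ρ h (A x)) :
    ∃ μ : ℂ, A = μ • 1 := by
  have := hρ.nontrivial
  obtain ⟨μ, hμ⟩ := Module.End.exists_eigenvalue A
  have hinv : ∀ h x, x ∈ A.eigenspace μ → ρ h x ∈ A.eigenspace μ := by
    intro h x hx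
    rw [Module.End.mem_eigenspace_iff] at hx ⊢
    rw [hA, hx, map_smul]
  have htop : A.eigenspace μ = ⊤ := (hρ.2 _ hinv).resolve_left hμ
  refine ⟨μ, LinearMap.ext fun x => ?_⟩
  simpa using Module.End.mem_eigenspace_iff.mp (htop ▸ Submodule.mem_top : x ∈ A.eigenspace μ)

theorem IsIrreducibleRep.sum_conj_eq [Fintype H] [FiniteDimensional ℂ E] {ρ : H →* (E ≃ₗ[ℂ] E)}
    (hρ : IsIrreducibleRep ρ) (M : Module.End ℂ E) :
    ∑ h, (ρ h).conj M =
      ((Fintype.card H * LinearMap.trace ℂ E M) / Module.finrank ℂ E : ℂ) • 1 := by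
  have := hρ.nontrivial
  have hcomm : ∀ h x, (∑ g, (ρ g).conj M) (ρ h x) = ρ h ((∑ g, (ρ g).conj M) x) := by
    intro h x
    simp only [LinearMap.sum_apply, LinearEquiv.conj_apply_apply, map_sum, rep_symm_apply]
    refine Fintype.sum_equiv (Equiv.mulLeft h⁻¹) _ _ fun g => ?_
    simp only [Equiv.coe_mulLeft, ← rep_mul_apply, mul_inv_rev, inv_inv, mul_inv_cancel_left]
  obtain ⟨μ, hμ⟩ := hρ.exists_eq_smul_one hcomm
  have htrace :
      LinearMap.trace ℂ E (∑ g, (ρ g).conj M) = Fintype.card H * LinearMap.trace ℂ E M := by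
    simp [map_sum]
  rw [hμ, map_smul, LinearMap.trace_one, smul_eq_mul] at htrace
  rw [hμ, ← htrace, mul_div_cancel_right₀ _ (Nat.cast_ne_zero.mpr Module.finrank_pos.ne')]

end Representations

section Unitary

variable {H E F : Type} [Group H] [NormedAddCommGroup E] [InnerProductSpace ℂ E]
  [NormedAddCommGroup F] [InnerProductSpace ℂ F]

theorem IsUnitaryRep.inner_map_left {ρ : H →* (E ≃ₗ[ℂ] E)} (hρ : IsUnitaryRep ρ) (h : H)
    (x y : E) : inner ℂ (ρ h x) y = inner ℂ x (ρ h⁻¹ y) := by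
  simpa only [rep_apply_inv_apply] using hρ h x (ρ h⁻¹ y)

variable [FiniteDimensional ℂ E] [FiniteDimensional ℂ F]

theorem IsUnitaryRep.adjoint_apply_rep {ρ : H →* (E ≃ₗ[ℂ] E)} {τ : H →* (F ≃ₗ[ℂ] F)}
    (hρ : IsUnitaryRep ρ) (hτ : IsUnitaryRep τ) {L : E →ₗ[ℂ] F}
    (hL : ∀ h x, L (ρ h x) = τ h (L x)) (h : H) (y : F) :
    LinearMap.adjoint L (τ h y) = ρ h (LinearMap.adjoint L y) := by
  refine ext_inner_left ℂ fun x => ?_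
  calc inner ℂ x (LinearMap.adjoint L (τ h y))
      = inner ℂ (L x) (τ h y) := LinearMap.adjoint_inner_right L x _
    _ = inner ℂ (τ h⁻¹ (L x)) y := by rw [hτ.inner_map_left, inv_inv]
    _ = inner ℂ (ρ h⁻¹ x) (LinearMap.adjoint L y) := by rw [← hL, LinearMap.adjoint_inner_right]
    _ = inner ℂ x (ρ h (LinearMap.adjoint L y)) := by rw [hρ.inner_map_left, inv_inv]

theorem adjoint_comp_self_of_norm_map {L : E →ₗ[ℂ] F} (hL : ∀ x, ‖L x‖ = ‖x‖) :
    LinearMap.adjoint L ∘ₗ L = LinearMap.id := by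
  refine LinearMap.ext fun x => ext_inner_left ℂ fun y => ?_
  rw [LinearMap.comp_apply, LinearMap.adjoint_inner_right, LinearMap.id_apply,
    (LinearMap.norm_map_iff_inner_map_map L).mp hL]

theorem trace_comp_adjoint_of_norm_map {L : E →ₗ[ℂ] F} (hL : ∀ x, ‖L x‖ = ‖x‖) :
    LinearMap.trace ℂ F (L ∘ₗ LinearMap.adjoint L) = Module.finrank ℂ E := by
  rw [LinearMap.trace_comp_comm', adjoint_comp_self_of_norm_map hL, LinearMap.trace_id]

end Unitary

section InducedRep

variable {W : Type} [NormedAddCommGroup W] [InnerProductSpace ℂ W] [FiniteDimensional ℂ W]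
  (σ : G →* (W ≃ₗ[ℂ] W)) (L : V →ₗ[ℂ] W)

theorem Tsig_add (w₁ w₂ : W) : Tsig K σ L (w₁ + w₂) = Tsig K σ L w₁ + Tsig K σ L w₂ := by
  funext g
  simp [Tsig, smul_add]

theorem Tsig_smul (c : ℂ) (w : W) : Tsig K σ L (c • w) = c • Tsig K σ L w := by
  funext g
  simp only [Tsig, map_smul, Pi.smul_apply]
  rw [smul_comm]

theorem Tsig_rep_apply (h : G) (w : W) : Tsig K σ L (σ h w) = translate h (Tsig K σ L w) := by
  funext g
  simp only [Tsig, translate, ← rep_mul_apply, mul_inv_rev, inv_inv]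

variable {K σ L}

theorem Tsig_mem_ind (hu : IsUnitaryRep θ) (huσ : IsUnitaryRep σ)
    (hLequiv : ∀ (k : K) (x : V), L (θ k x) = σ (k : G) (L x)) (w : W) :
    Tsig K σ L w ∈ ind K θ := by
  intro g k
  have hLres : ∀ (k : K) (x : V), L (θ k x) = σ.comp K.subtype k (L x) := hLequiv
  have hres : IsUnitaryRep (σ.comp K.subtype) := fun k => huσ k
  simp only [Tsig, map_smul, mul_inv_rev, rep_mul_apply]
  rw [← hu.adjoint_apply_rep hres hLres]
  rfl

theorem inner_Tsig_apply (huσ : IsUnitaryRep σ) (w₁ w₂ : W) (g : G) :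
    inner ℂ (Tsig K σ L w₂ g) (Tsig K σ L w₁ g) =
      (((Module.finrank ℂ W * Nat.card K : ℝ) / (Module.finrank ℂ V * Fintype.card G) : ℝ) : ℂ) *
        inner ℂ w₂ ((σ g).conj (L ∘ₗ LinearMap.adjoint L) w₁) := by
  unfold Tsig
  rw [inner_smul_left, inner_smul_right, Complex.conj_ofReal, ← mul_assoc,
    ← Complex.ofReal_mul, Real.mul_self_sqrt (by positivity), LinearMap.adjoint_inner_left,
    huσ.inner_map_left, inv_inv, LinearEquiv.conj_apply_apply, rep_symm_apply,
    LinearMap.comp_apply]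

theorem innerInd_Tsig [Nontrivial V] (huσ : IsUnitaryRep σ) (hirrσ : IsIrreducibleRep σ)
    (hLiso : ∀ x : V, ‖L x‖ = ‖x‖) (w₁ w₂ : W) :
    innerInd K (Tsig K σ L w₁) (Tsig K σ L w₂) = inner ℂ w₂ w₁ := by
  have := hirrσ.nontrivial
  have hsum := hirrσ.sum_conj_eq (L ∘ₗ LinearMap.adjoint L)
  rw [trace_comp_adjoint_of_norm_map hLiso] at hsum
  have hV : (Module.finrank ℂ V : ℂ) ≠ 0 := Nat.cast_ne_zero.mpr Module.finrank_pos.ne'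
  have hW : (Module.finrank ℂ W : ℂ) ≠ 0 := Nat.cast_ne_zero.mpr Module.finrank_pos.ne'
  have hG : (Fintype.card G : ℂ) ≠ 0 := Nat.cast_ne_zero.mpr Fintype.card_ne_zero
  have hK : (Nat.card K : ℂ) ≠ 0 := Nat.cast_ne_zero.mpr Nat.card_pos.ne'
  simp only [innerInd, inner_Tsig_apply huσ, ← Finset.mul_sum, ← inner_sum,
    ← LinearMap.sum_apply, hsum, LinearMap.smul_apply, Module.End.one_apply, inner_smul_right]
  push_cast
  field_simp

end InducedRep

theorem statement10_general (K : Subgroup G) (θ : ↥K →* (V ≃ₗ[ℂ] V))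
    (hu : IsUnitaryRep θ) (hirr : IsIrreducibleRep θ)
    (W : Type) [NormedAddCommGroup W] [InnerProductSpace ℂ W] [FiniteDimensional ℂ W]
    (σ : G →* (W ≃ₗ[ℂ] W)) (huσ : IsUnitaryRep σ) (hirrσ : IsIrreducibleRep σ)
    -- L is an isometric K-equivariant map spanning Hom_K(V, Res^G_K W)
    (L : V →ₗ[ℂ] W) (hLiso : ∀ x : V, ‖L x‖ = ‖x‖)
    (hLequiv : ∀ (k : K) (x : V), L (θ k x) = σ (k : G) (L x)) :
    -- T_σ maps into the induced space,
    (∀ w : W, Tsig K σ L w ∈ ind K θ) ∧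
    -- is linear,
    (∀ w₁ w₂ : W, Tsig K σ L (w₁ + w₂) = Tsig K σ L w₁ + Tsig K σ L w₂) ∧
    (∀ (c : ℂ) (w : W), Tsig K σ L (c • w) = c • Tsig K σ L w) ∧
    -- G-equivariant,
    (∀ (h : G) (w : W), Tsig K σ L (σ h w) = translate h (Tsig K σ L w)) ∧
    -- and isometric
    (∀ w₁ w₂ : W, innerInd K (Tsig K σ L w₁) (Tsig K σ L w₂) = (inner ℂ w₂ w₁ : ℂ)) := by
  have := hirr.nontrivial
  exact ⟨Tsig_mem_ind θ hu huσ hLequiv, Tsig_add K σ L, Tsig_smul K σ L, Tsig_rep_apply K σ L,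
    innerInd_Tsig huσ hirrσ hLiso⟩

/-- Let `(G,K,θ)` be a multiplicity-free triple, `(σ, W)` an irreducible
unitary `G`-representation contained in `Ind_K^G θ` and `L_σ : V → W` an isometric
`K`-equivariant map spanning the one-dimensional space `Hom_K(V, Res^G_K W)`.  Then
`T_σ : W → (G → V)` takes values in `Ind_K^G V`, is linear, `G`-equivariant and isometric. -/
theorem statement10 (K : Subgroup G) (θ : ↥K →* (V ≃ₗ[ℂ] V))
    (hu : IsUnitaryRep θ) (hirr : IsIrreducibleRep θ) (v : V) (hv : ‖v‖ = 1)
    (hmf : IsMultFree K θ)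
    (W : Type) [NormedAddCommGroup W] [InnerProductSpace ℂ W] [FiniteDimensional ℂ W]
    (σ : G →* (W ≃ₗ[ℂ] W)) (huσ : IsUnitaryRep σ) (hirrσ : IsIrreducibleRep σ)
    -- σ is contained in Ind_K^G θ
    (hcont : homGInd K θ σ ≠ ⊥)
    -- L is an isometric K-equivariant map spanning Hom_K(V, Res^G_K W)
    (L : V →ₗ[ℂ] W) (hLiso : ∀ x : V, ‖L x‖ = ‖x‖)
    (hLequiv : ∀ (k : K) (x : V), L (θ k x) = σ (k : G) (L x))
    (hLspan : ∀ A : V →ₗ[ℂ] W, (∀ (k : K) (x : V), A (θ k x) = σ (k : G) (A x)) →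
      ∃ c : ℂ, A = c • L) :
    -- T_σ maps into the induced space,
    (∀ w : W, Tsig K σ L w ∈ ind K θ) ∧
    -- is linear,
    (∀ w₁ w₂ : W, Tsig K σ L (w₁ + w₂) = Tsig K σ L w₁ + Tsig K σ L w₂) ∧
    (∀ (c : ℂ) (w : W), Tsig K σ L (c • w) = c • Tsig K σ L w) ∧
    -- G-equivariant,
    (∀ (h : G) (w : W), Tsig K σ L (σ h w) = translate h (Tsig K σ L w)) ∧
    -- and isometric
    (∀ w₁ w₂ : W, innerInd K (Tsig K σ L w₁) (Tsig K σ L w₂) = (inner ℂ w₂ w₁ : ℂ)) :=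
  statement10_general K θ hu hirr W σ huσ hirrσ L hLiso hLequiv

end MFT
end
end
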